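/- arXiv:2412.11313 — 6 statements merged into one kernel-verified Lean document; each statement's English description precedes it below -/
import Mathlib

section
/- If φ: ℝⁿ → ℝ is a continuous convex function and Φ: ℝⁿ → ℝᵐ is a linear map, then the set ∂φ*(Im Φ*) = {x ∈ ℝⁿ : ∃ u ∈ ℝᵐ, Φ*u ∈ ∂φ(x)} is closed. -/
/-!
A subgradient `v` at `x'` satisfies `r * ‖v‖ ≤ sup_{closedBall x' r} φ - φ x'` (test the inequality at
`x' + (r / ‖v‖) • v`), so near any point the subgradients of a continuous `φ` are bounded. Hence,
locally, our set is the projection of a compact piece of the (closed) graph of the subdifferential,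
intersected with the closed set of admissible slopes; and `Im Φ*` is closed, being a subspace of a
finite-dimensional space.
-/

open Metric Set
open scoped RealInnerProductSpace

variable {E : Type*} [NormedAddCommGroup E] [InnerProductSpace ℝ E]

def IsSubgradient (φ : E → ℝ) (v x : E) : Prop :=
  ∀ y, ⟪v, y - x⟫ ≤ φ y - φ x

theorem IsSubgradient.mul_norm_le {φ : E → ℝ} {v x : E} {r C : ℝ} (hv : IsSubgradient φ v x)
    (hr : 0 ≤ r) (hC : ∀ y ∈ closedBall x r, φ y ≤ C) : r * ‖v‖ ≤ C - φ x := by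
  rcases eq_or_ne v 0 with rfl | hv0
  · simpa using hC x (mem_closedBall_self hr)
  have hv0' : ‖v‖ ≠ 0 := norm_ne_zero_iff.2 hv0
  set y := x + (r / ‖v‖) • v
  have hyx : y - x = (r / ‖v‖) • v := add_sub_cancel_left x _
  have hy : y ∈ closedBall x r := by
    rw [mem_closedBall, dist_eq_norm, hyx, norm_smul, Real.norm_of_nonneg (by positivity),
      div_mul_cancel₀ r hv0']
  have hinner : ⟪v, y - x⟫ = r * ‖v‖ := by
    rw [hyx, real_inner_smul_right, real_inner_self_eq_norm_sq]
    field_simp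
  linarith [hv y, hC y hy]

theorem isClosed_setOf_isSubgradient {φ : E → ℝ} (hφ : Continuous φ) :
    IsClosed {p : E × E | IsSubgradient φ p.2 p.1} := by
  simp only [IsSubgradient, ofPred_forall]
  exact isClosed_iInter fun y ↦ isClosed_le (by fun_prop) (by fun_prop)

theorem exists_norm_le_of_isSubgradient_of_mem_closedBall [ProperSpace E] {φ : E → ℝ}
    (hφ : Continuous φ) (x : E) :
    ∃ R, ∀ x' ∈ closedBall x 1, ∀ v, IsSubgradient φ v x' → ‖v‖ ≤ R := by
  obtain ⟨C, hC⟩ := (isCompact_closedBall x 2).exists_bound_of_continuousOn hφ.continuousOn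
  refine ⟨2 * C, fun x' hx' v hv ↦ ?_⟩
  have hball : closedBall x' 1 ⊆ closedBall x 2 := by
    refine closedBall_subset_closedBall' ?_
    linarith [mem_closedBall.1 hx']
  have hupper : ∀ y ∈ closedBall x' 1, φ y ≤ C := fun y hy ↦ (le_abs_self _).trans (hC y (hball hy))
  have hlower : -C ≤ φ x' := neg_le_of_abs_le (hC x' (hball (mem_closedBall_self zero_le_one)))
  linarith [hv.mul_norm_le zero_le_one hupper]

theorem isClosed_setOf_exists_isSubgradient_mem [ProperSpace E] {φ : E → ℝ} (hφ : Continuous φ)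
    {S : Set E} (hS : IsClosed S) :
    IsClosed {x | ∃ v ∈ S, IsSubgradient φ v x} := by
  refine isClosed_of_closure_subset fun x hx ↦ ?_
  obtain ⟨R, hR⟩ := exists_norm_le_of_isSubgradient_of_mem_closedBall hφ x
  set T := Prod.fst '' ({p : E × E | IsSubgradient φ p.2 p.1} ∩
    closedBall x 1 ×ˢ (S ∩ closedBall 0 R))
  have hT : IsClosed T :=
    (((isCompact_closedBall x 1).prod ((isCompact_closedBall 0 R).inter_left hS)).inter_left
      (isClosed_setOf_isSubgradient hφ)).image continuous_fst |>.isClosed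
  have hlocal : ball x 1 ∩ {x | ∃ v ∈ S, IsSubgradient φ v x} ⊆ T := by
    rintro x' ⟨hx', v, hvS, hv⟩
    have hx'' := ball_subset_closedBall hx'
    exact ⟨(x', v), ⟨hv, hx'', hvS, mem_closedBall_zero_iff.2 (hR x' hx'' v hv)⟩, rfl⟩
  obtain ⟨⟨_, v⟩, ⟨hv, -, hvS, -⟩, rfl⟩ :=
    closure_minimal hlocal hT (isOpen_ball.inter_closure ⟨mem_ball_self one_pos, hx⟩)
  exact ⟨v, hvS, hv⟩

theorem stmt0_general (n m : ℕ) (φ : EuclideanSpace ℝ (Fin n) → ℝ)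
    (hcont : Continuous φ)
    (Φ : EuclideanSpace ℝ (Fin n) →L[ℝ] EuclideanSpace ℝ (Fin m)) :
    IsClosed {x : EuclideanSpace ℝ (Fin n) |
      ∃ u : EuclideanSpace ℝ (Fin m),
        ∀ y : EuclideanSpace ℝ (Fin n),
          φ y - φ x ≥ @inner ℝ _ _ ((ContinuousLinearMap.adjoint Φ) u) (y - x)} := by
  have hrange : IsClosed (range (ContinuousLinearMap.adjoint Φ)) :=
    (LinearMap.range (ContinuousLinearMap.adjoint Φ).toLinearMap).closed_of_finiteDimensional
  have hclosed := isClosed_setOf_exists_isSubgradient_mem hcont hrange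
  simp only [exists_range_iff] at hclosed
  exact hclosed

theorem stmt0 (n m : ℕ) (φ : EuclideanSpace ℝ (Fin n) → ℝ)
    (hconv : ConvexOn ℝ Set.univ φ) (hcont : Continuous φ)
    (Φ : EuclideanSpace ℝ (Fin n) →L[ℝ] EuclideanSpace ℝ (Fin m)) :
    IsClosed {x : EuclideanSpace ℝ (Fin n) |
      ∃ u : EuclideanSpace ℝ (Fin m),
        ∀ y : EuclideanSpace ℝ (Fin n),
          φ y - φ x ≥ @inner ℝ _ _ ((ContinuousLinearMap.adjoint Φ) u) (y - x)} :=
  stmt0_general n m φ hcont Φ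
end

section
/- Let R: ℝⁿ → ℝ be a continuous convex function, Φ: ℝⁿ → ℝᵐ linear, x₀ a minimizer of R subject to Φx = Φx₀. Then the tangent cone T_{∂R*(Im Φ*)}(x₀) is contained in the union over all dual certificates v ∈ ∂R(x₀) ∩ Im Φ* of the normal cones N_{∂R(x₀)}(v). -/
/-- The convex subdifferential of `R` at `x`. -/
def subdiff {n : ℕ} (R : EuclideanSpace ℝ (Fin n) → ℝ)
    (x : EuclideanSpace ℝ (Fin n)) : Set (EuclideanSpace ℝ (Fin n)) :=
  {v | ∀ y, R y - R x ≥ @inner ℝ _ _ v (y - x)}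

/-- The contingent (tangent) cone to `Ω` at `x₀`. -/
def contingentCone {n : ℕ} (Ω : Set (EuclideanSpace ℝ (Fin n)))
    (x₀ : EuclideanSpace ℝ (Fin n)) : Set (EuclideanSpace ℝ (Fin n)) :=
  {w | ∃ t : ℕ → ℝ, ∃ c : ℕ → EuclideanSpace ℝ (Fin n),
    (∀ k, 0 < t k) ∧ Filter.Tendsto t Filter.atTop (nhds 0) ∧
    Filter.Tendsto c Filter.atTop (nhds w) ∧ ∀ k, x₀ + t k • c k ∈ Ω}

/-!
Write `w` as the limit of `c k` with `x₀ + t k • c k ∈ ∂R*(Im Φ*)`, certified by `v k ∈ Im Φ*`.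
Subgradients of a continuous function are locally bounded, so a subsequence of `v k` converges
to some `v`; the subgradient inequality passes to the limit, so `v ∈ ∂R(x₀)`, and `v ∈ Im Φ*`
because that subspace is closed. Monotonicity of `∂R` gives `⟪c k, z - v k⟫ ≤ 0` for every
`z ∈ ∂R(x₀)`, and in the limit `⟪w, z - v⟫ ≤ 0`.
-/

open Filter Metric Topology

section Subdifferential

variable {n : ℕ} {R : EuclideanSpace ℝ (Fin n) → ℝ}

lemma inner_sub_sub_nonneg_of_mem_subdiff {x y v z : EuclideanSpace ℝ (Fin n)}
    (hv : v ∈ subdiff R x) (hz : z ∈ subdiff R y) : 0 ≤ @inner ℝ _ _ (v - z) (x - y) := by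
  have hvy := hv y
  have hzx := hz x
  rw [inner_sub_left, ← neg_sub x y, inner_neg_right] at *
  linarith

lemma mul_norm_le_of_mem_subdiff {x v : EuclideanSpace ℝ (Fin n)} {r C : ℝ} (hr : 0 < r)
    (hC : ∀ y ∈ closedBall x r, |R y| ≤ C) (hv : v ∈ subdiff R x) : r * ‖v‖ ≤ 2 * C := by
  have hCx := abs_le.mp (hC x (mem_closedBall_self hr.le))
  rcases eq_or_ne v 0 with rfl | hv0
  · simp only [norm_zero, mul_zero]
    linarith
  have hnorm : 0 < ‖v‖ := norm_pos_iff.mpr hv0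
  set y := x + (r * ‖v‖⁻¹) • v
  have hyx : y - x = (r * ‖v‖⁻¹) • v := add_sub_cancel_left x _
  have hy : y ∈ closedBall x r := by
    rw [mem_closedBall, dist_eq_norm, hyx, norm_smul, Real.norm_of_nonneg (by positivity),
      mul_assoc, inv_mul_cancel₀ hnorm.ne', mul_one]
  have hinner : @inner ℝ _ _ v (y - x) = r * ‖v‖ := by
    rw [hyx, real_inner_smul_right, real_inner_self_eq_norm_sq]
    field_simp
  have hCy := abs_le.mp (hC y hy)
  have := hv y
  linarith

lemma exists_forall_norm_le_of_mem_subdiff (hcont : Continuous R)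
    (x₀ : EuclideanSpace ℝ (Fin n)) :
    ∃ C, ∀ x v, dist x x₀ ≤ 1 → v ∈ subdiff R x → ‖v‖ ≤ C := by
  obtain ⟨C, hC⟩ := (isCompact_closedBall x₀ 2).exists_bound_of_continuousOn hcont.continuousOn
  refine ⟨2 * C, fun x v hx hv => ?_⟩
  have hball : closedBall x 1 ⊆ closedBall x₀ 2 :=
    closedBall_subset_closedBall' (by linarith)
  simpa using mul_norm_le_of_mem_subdiff one_pos (fun y hy => hC y (hball hy)) hv

lemma mem_subdiff_of_tendsto {ι : Type*} {l : Filter ι} [l.NeBot]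
    {x v : ι → EuclideanSpace ℝ (Fin n)} {x₀ v₀ : EuclideanSpace ℝ (Fin n)}
    (hcont : ContinuousAt R x₀) (hx : Tendsto x l (𝓝 x₀)) (hv : Tendsto v l (𝓝 v₀))
    (hmem : ∀ i, v i ∈ subdiff R (x i)) : v₀ ∈ subdiff R x₀ := fun y =>
  le_of_tendsto_of_tendsto' (hv.inner (tendsto_const_nhds.sub hx))
    (tendsto_const_nhds.sub (hcont.tendsto.comp hx)) fun i => hmem i y

lemma inner_sub_nonpos_of_mem_subdiff_add_smul {x c v z : EuclideanSpace ℝ (Fin n)} {t : ℝ}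
    (ht : 0 < t) (hv : v ∈ subdiff R (x + t • c)) (hz : z ∈ subdiff R x) :
    @inner ℝ _ _ c (z - v) ≤ 0 := by
  have hmono := inner_sub_sub_nonneg_of_mem_subdiff hv hz
  rw [add_sub_cancel_left, real_inner_smul_right, real_inner_comm] at hmono
  rw [← neg_sub, inner_neg_right, neg_nonpos]
  exact nonneg_of_mul_nonneg_right hmono ht

lemma exists_subseq_tendsto_mem_subdiff (hcont : Continuous R)
    {x v : ℕ → EuclideanSpace ℝ (Fin n)} {x₀ : EuclideanSpace ℝ (Fin n)}
    (hx : Tendsto x atTop (𝓝 x₀)) (hv : ∀ k, v k ∈ subdiff R (x k)) :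
    ∃ v₀ ∈ subdiff R x₀, ∃ φ : ℕ → ℕ, StrictMono φ ∧ Tendsto (v ∘ φ) atTop (𝓝 v₀) := by
  obtain ⟨C, hC⟩ := exists_forall_norm_le_of_mem_subdiff hcont x₀
  have hbdd : ∀ᶠ k in atTop, v k ∈ closedBall 0 C :=
    (hx.eventually (closedBall_mem_nhds x₀ one_pos)).mono fun k hk =>
      mem_closedBall_zero_iff.mpr (hC _ _ hk (hv k))
  obtain ⟨v₀, -, φ, hφ, hlim⟩ := (isCompact_closedBall 0 C).tendsto_subseq' hbdd.frequently
  exact ⟨v₀, mem_subdiff_of_tendsto hcont.continuousAt (hx.comp hφ.tendsto_atTop) hlim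
    fun k => hv (φ k), φ, hφ, hlim⟩

end Subdifferential

lemma ContinuousLinearMap.isClosed_range_of_finiteDimensional {E F : Type*}
    [NormedAddCommGroup E] [NormedSpace ℝ E] [FiniteDimensional ℝ E]
    [NormedAddCommGroup F] [NormedSpace ℝ F] (A : E →L[ℝ] F) : IsClosed (Set.range A) := by
  rw [← ContinuousLinearMap.coe_coe, ← LinearMap.coe_range]
  exact (LinearMap.range A.toLinearMap).closed_of_finiteDimensional

theorem stmt3_general (n m : ℕ) (R : EuclideanSpace ℝ (Fin n) → ℝ)
    (hcont : Continuous R)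
    (Φ : EuclideanSpace ℝ (Fin n) →L[ℝ] EuclideanSpace ℝ (Fin m))
    (x₀ : EuclideanSpace ℝ (Fin n)) :
    ∀ w ∈ contingentCone
        {x | ∃ u, (ContinuousLinearMap.adjoint Φ) u ∈ subdiff R x} x₀,
      ∃ v, v ∈ subdiff R x₀ ∧ v ∈ Set.range (ContinuousLinearMap.adjoint Φ) ∧
        ∀ z ∈ subdiff R x₀, @inner ℝ _ _ w (z - v) ≤ (0 : ℝ) := by
  rintro w ⟨t, c, ht, ht0, hc, hmem⟩
  choose u hu using hmem
  have hx : Tendsto (fun k => x₀ + t k • c k) atTop (𝓝 x₀) := by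
    simpa using tendsto_const_nhds.add (ht0.smul hc)
  obtain ⟨v, hv, φ, hφ, hlim⟩ := exists_subseq_tendsto_mem_subdiff hcont hx hu
  refine ⟨v, hv, ?_, fun z hz => ?_⟩
  · exact (ContinuousLinearMap.adjoint Φ).isClosed_range_of_finiteDimensional.mem_of_tendsto hlim
      (Eventually.of_forall fun k => ⟨u (φ k), rfl⟩)
  · exact le_of_tendsto ((hc.comp hφ.tendsto_atTop).inner (tendsto_const_nhds.sub hlim))
      (Eventually.of_forall fun k => inner_sub_nonpos_of_mem_subdiff_add_smul (ht _) (hu _) hz)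

theorem stmt3 (n m : ℕ) (R : EuclideanSpace ℝ (Fin n) → ℝ)
    (hconv : ConvexOn ℝ Set.univ R) (hcont : Continuous R)
    (Φ : EuclideanSpace ℝ (Fin n) →L[ℝ] EuclideanSpace ℝ (Fin m))
    (x₀ : EuclideanSpace ℝ (Fin n))
    (hmin : ∀ x, Φ x = Φ x₀ → R x₀ ≤ R x) :
    ∀ w ∈ contingentCone
        {x | ∃ u, (ContinuousLinearMap.adjoint Φ) u ∈ subdiff R x} x₀,
      ∃ v, v ∈ subdiff R x₀ ∧ v ∈ Set.range (ContinuousLinearMap.adjoint Φ) ∧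
        ∀ z ∈ subdiff R x₀, @inner ℝ _ _ w (z - v) ≤ (0 : ℝ) :=
  stmt3_general n m R hcont Φ x₀
end

section
/- Let R: ℝⁿ → ℝ be continuous convex, Φ linear, and x₀ a minimizer of R subject to Φx = Φx₀. If w ∈ Ker Φ lies in N_{∂R(x₀)}(v) for some v ∈ ∂R(x₀) ∩ Im Φ*, then the directional derivative dR(x₀)(w) equals 0. -/
/-!
The one-sided directional derivative `d = dR(x₀)` of a convex function is sublinear, so by
Hahn–Banach some subgradient `z` of `R` at `x₀` satisfies `⟪z, w⟫ = d w` (the max formula).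
Since `w` is normal to `∂R(x₀)` at `v`, `d w = ⟪w, z⟫ ≤ ⟪w, v⟫ = 0`, the last inner product
vanishing because `v ∈ Im Φ*` and `w ∈ Ker Φ`. Conversely `x₀ + t • w` is feasible, so the
difference quotients are nonnegative and `d w ≥ 0`.
-/

open Set Filter Topology

/-- `derivWithin` is `0` where the right derivative does not exist; for convex `f` it always
does. -/
noncomputable def dirDeriv {E : Type*} [AddCommGroup E] [Module ℝ E] (f : E → ℝ) (x u : E) : ℝ :=
  derivWithin (fun t : ℝ => f (x + t • u)) (Ioi 0) 0

theorem exists_linearMap_le_sublinear_eq_at {E : Type*} [AddCommGroup E] [Module ℝ E]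
    (N : E → ℝ) (N_hom : ∀ c : ℝ, 0 < c → ∀ x, N (c • x) = c * N x)
    (N_add : ∀ x y, N (x + y) ≤ N x + N y) (w : E) :
    ∃ g : E →ₗ[ℝ] ℝ, (∀ x, g x ≤ N x) ∧ g w = N w := by
  have N_zero : N 0 = 0 := by
    have := N_hom 2 two_pos 0
    rw [smul_zero] at this
    linarith
  have N_neg : -N w ≤ N (-w) := by
    have := N_add w (-w)
    rw [add_neg_cancel, N_zero] at this
    linarith
  let f : E →ₗ.[ℝ] ℝ := LinearPMap.mkSpanSingleton' w (N w) fun c hc => by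
    rcases smul_eq_zero.mp hc with rfl | rfl
    · exact zero_smul ℝ _
    · rw [N_zero, smul_zero]
  have hf : ∀ x : f.domain, f x ≤ N x := by
    rintro ⟨x, hx⟩
    obtain ⟨c, rfl⟩ := Submodule.mem_span_singleton.mp hx
    rw [LinearPMap.mkSpanSingleton'_apply, smul_eq_mul]
    rcases lt_trichotomy c 0 with hc | rfl | hc
    · calc c * N w = -c * -N w := by ring
        _ ≤ -c * N (-w) := mul_le_mul_of_nonneg_left N_neg (by linarith)
        _ = N (c • w) := by rw [← N_hom (-c) (by linarith), smul_neg, neg_smul, neg_neg]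
    · simp [N_zero]
    · exact (N_hom c hc w).ge
  obtain ⟨g, hgf, hgN⟩ := exists_extension_of_le_sublinear f N N_hom N_add hf
  exact ⟨g, hgN, (hgf ⟨w, Submodule.mem_span_singleton_self w⟩).trans
    (LinearPMap.mkSpanSingleton'_apply_self _ _ _ _)⟩

namespace ConvexOn

variable {E : Type*} [AddCommGroup E] [Module ℝ E] {f : E → ℝ}

theorem comp_line (hf : ConvexOn ℝ univ f) (x u : E) :
    ConvexOn ℝ univ (fun t : ℝ => f (x + t • u)) := by
  have hline : (fun t : ℝ => f (x + t • u)) = f ∘ AffineMap.lineMap x (x + u) := by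
    ext t
    simp [AffineMap.lineMap_apply_module', add_comm]
  simpa [hline] using hf.comp_affineMap (AffineMap.lineMap x (x + u))

theorem hasDerivWithinAt_dirDeriv (hf : ConvexOn ℝ univ f) (x u : E) :
    HasDerivWithinAt (fun t : ℝ => f (x + t • u)) (dirDeriv f x u) (Ioi 0) 0 :=
  (hf.comp_line x u).hasDerivWithinAt_rightDeriv_of_mem_interior (by simp)

theorem tendsto_dirDeriv (hf : ConvexOn ℝ univ f) (x u : E) :
    Tendsto (fun t : ℝ => (f (x + t • u) - f x) / t) (𝓝[>] 0) (𝓝 (dirDeriv f x u)) := by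
  have := (hasDerivWithinAt_iff_tendsto_slope' self_notMem_Ioi).mp
    (hf.hasDerivWithinAt_dirDeriv x u)
  convert this using 2 with t
  simp [slope_def_field]

theorem dirDeriv_nonneg (hf : ConvexOn ℝ univ f) {x u : E}
    (hmin : ∀ t : ℝ, 0 < t → f x ≤ f (x + t • u)) : 0 ≤ dirDeriv f x u := by
  refine ge_of_tendsto (hf.tendsto_dirDeriv x u) ?_
  filter_upwards [self_mem_nhdsWithin] with t ht
  exact div_nonneg (sub_nonneg.mpr (hmin t ht)) (le_of_lt ht)

theorem dirDeriv_le_sub (hf : ConvexOn ℝ univ f) (x u : E) :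
    dirDeriv f x u ≤ f (x + u) - f x := by
  simpa [dirDeriv, slope_def_field] using
    (hf.comp_line x u).rightDeriv_le_slope_of_mem_interior (x := 0) (y := 1) (by simp)
      (mem_univ _) one_pos

theorem dirDeriv_smul (hf : ConvexOn ℝ univ f) (x u : E) {c : ℝ} (hc : 0 < c) :
    dirDeriv f x (c • u) = c * dirDeriv f x u := by
  have hscale : HasDerivWithinAt (fun t : ℝ => c * t) c (Ioi 0) 0 := by
    simpa using ((hasDerivAt_id (0 : ℝ)).const_mul c).hasDerivWithinAt
  have hcomp := (hf.hasDerivWithinAt_dirDeriv x u).comp_of_eq 0 hscale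
    (fun t ht => mul_pos hc ht) (mul_zero c).symm
  rw [mul_comm, ← hcomp.derivWithin (uniqueDiffWithinAt_Ioi 0)]
  simp only [dirDeriv, Function.comp_def, smul_smul, mul_comm]

theorem dirDeriv_add_le (hf : ConvexOn ℝ univ f) (x u v : E) :
    dirDeriv f x (u + v) ≤ dirDeriv f x u + dirDeriv f x v := by
  have hmid : ∀ t : ℝ, f (x + t • (u + v)) ≤
      1 / 2 * f (x + t • ((2 : ℝ) • u)) + 1 / 2 * f (x + t • ((2 : ℝ) • v)) := by
    intro t
    calc f (x + t • (u + v))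
        = f ((1 / 2 : ℝ) • (x + t • ((2 : ℝ) • u)) + (1 / 2 : ℝ) • (x + t • ((2 : ℝ) • v))) := by
          congr 1; module
      _ ≤ _ := hf.2 (mem_univ _) (mem_univ _) (by norm_num) (by norm_num) (by norm_num)
  have hquot : ∀ᶠ t in 𝓝[>] (0 : ℝ), (f (x + t • (u + v)) - f x) / t ≤
      1 / 2 * ((f (x + t • ((2 : ℝ) • u)) - f x) / t) +
        1 / 2 * ((f (x + t • ((2 : ℝ) • v)) - f x) / t) := by
    filter_upwards [self_mem_nhdsWithin] with t (ht : 0 < t)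
    calc (f (x + t • (u + v)) - f x) / t
        ≤ (1 / 2 * f (x + t • ((2 : ℝ) • u)) + 1 / 2 * f (x + t • ((2 : ℝ) • v)) - f x) / t := by
          gcongr; exact hmid t
      _ = _ := by ring
  have := le_of_tendsto_of_tendsto (hf.tendsto_dirDeriv x (u + v))
    (((hf.tendsto_dirDeriv x ((2 : ℝ) • u)).const_mul _).add
      ((hf.tendsto_dirDeriv x ((2 : ℝ) • v)).const_mul _)) hquot
  rw [hf.dirDeriv_smul x u two_pos, hf.dirDeriv_smul x v two_pos] at this
  linarith

theorem exists_linearMap_le_dirDeriv_eq (hf : ConvexOn ℝ univ f) (x w : E) :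
    ∃ g : E →ₗ[ℝ] ℝ, (∀ u, g u ≤ dirDeriv f x u) ∧ g w = dirDeriv f x w :=
  exists_linearMap_le_sublinear_eq_at _ (fun _ hc u => hf.dirDeriv_smul x u hc)
    (hf.dirDeriv_add_le x) w

theorem exists_subgradient_inner_eq_dirDeriv {F : Type*} [NormedAddCommGroup F]
    [InnerProductSpace ℝ F] [FiniteDimensional ℝ F] {f : F → ℝ} (hf : ConvexOn ℝ univ f)
    (x w : F) :
    ∃ z : F, (∀ y, inner ℝ z (y - x) ≤ f y - f x) ∧ inner ℝ z w = dirDeriv f x w := by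
  obtain ⟨g, hg_le, hgw⟩ := hf.exists_linearMap_le_dirDeriv_eq x w
  refine ⟨(InnerProductSpace.toDual ℝ F).symm (LinearMap.toContinuousLinearMap g),
    fun y => ?_, ?_⟩ <;> rw [InnerProductSpace.toDual_symm_apply]
  · simpa using (hg_le (y - x)).trans (hf.dirDeriv_le_sub x (y - x))
  · exact hgw

end ConvexOn

theorem stmt4_general (n m : ℕ) (R : EuclideanSpace ℝ (Fin n) → ℝ)
    (hconv : ConvexOn ℝ Set.univ R)
    (Φ : EuclideanSpace ℝ (Fin n) →L[ℝ] EuclideanSpace ℝ (Fin m))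
    (x₀ : EuclideanSpace ℝ (Fin n))
    (hmin : ∀ x, Φ x = Φ x₀ → R x₀ ≤ R x)
    (w : EuclideanSpace ℝ (Fin n)) (hw : Φ w = 0)
    (v : EuclideanSpace ℝ (Fin n))
    (hv₂ : v ∈ Set.range (ContinuousLinearMap.adjoint Φ))
    (hnc : ∀ z : EuclideanSpace ℝ (Fin n),
      (∀ y, R y - R x₀ ≥ @inner ℝ _ _ z (y - x₀)) →
      @inner ℝ _ _ w (z - v) ≤ (0 : ℝ)) :
    Filter.Tendsto (fun t : ℝ => (R (x₀ + t • w) - R x₀) / t)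
      (nhdsWithin (0 : ℝ) (Set.Ioi 0)) (nhds 0) := by
  have hwv : inner ℝ w v = 0 := by
    obtain ⟨y, rfl⟩ := hv₂
    rw [real_inner_comm, ContinuousLinearMap.adjoint_inner_left, hw, inner_zero_right]
  obtain ⟨z, hz, hzw⟩ := hconv.exists_subgradient_inner_eq_dirDeriv x₀ w
  have hle : dirDeriv R x₀ w ≤ 0 := by
    have := hnc z hz
    rwa [inner_sub_right, hwv, sub_zero, real_inner_comm, hzw] at this
  have hge : 0 ≤ dirDeriv R x₀ w :=
    hconv.dirDeriv_nonneg fun t _ => hmin _ (by simp [hw])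
  simpa [le_antisymm hle hge] using hconv.tendsto_dirDeriv x₀ w

theorem stmt4 (n m : ℕ) (R : EuclideanSpace ℝ (Fin n) → ℝ)
    (hconv : ConvexOn ℝ Set.univ R) (hcont : Continuous R)
    (Φ : EuclideanSpace ℝ (Fin n) →L[ℝ] EuclideanSpace ℝ (Fin m))
    (x₀ : EuclideanSpace ℝ (Fin n))
    (hmin : ∀ x, Φ x = Φ x₀ → R x₀ ≤ R x)
    (w : EuclideanSpace ℝ (Fin n)) (hw : Φ w = 0)
    (v : EuclideanSpace ℝ (Fin n))
    (hv₁ : ∀ y, R y - R x₀ ≥ @inner ℝ _ _ v (y - x₀))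
    (hv₂ : v ∈ Set.range (ContinuousLinearMap.adjoint Φ))
    (hnc : ∀ z : EuclideanSpace ℝ (Fin n),
      (∀ y, R y - R x₀ ≥ @inner ℝ _ _ z (y - x₀)) →
      @inner ℝ _ _ w (z - v) ≤ (0 : ℝ)) :
    Filter.Tendsto (fun t : ℝ => (R (x₀ + t • w) - R x₀) / t)
      (nhdsWithin (0 : ℝ) (Set.Ioi 0)) (nhds 0) :=
  stmt4_general n m R hconv Φ x₀ hmin w hw v hv₂ hnc
end

section
/- Let R: ℝⁿ → ℝ be convex and twice continuously differentiable near x₀, where x₀ minimizes R subject to Φx = Φx₀ for a linear map Φ. Then Ker Φ ∩ T_{∂R*(Im Φ*)}(x₀) ⊆ Ker Φ ∩ Ker ∇²R(x₀). -/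
open Filter Topology InnerProductSpace

theorem HasFDerivAt.apply_mem_of_tendsto {E F : Type*} [NormedAddCommGroup E] [NormedSpace ℝ E]
    [NormedAddCommGroup F] [NormedSpace ℝ F] {G : E → F} {H : E →L[ℝ] F} {x w : E}
    (hG : HasFDerivAt G H x) {K : Submodule ℝ F} (hK : IsClosed (K : Set F)) (hx : G x ∈ K)
    {α : Type*} {l : Filter α} [l.NeBot] {t : α → ℝ} {c : α → E} (ht₀ : ∀ k, t k ≠ 0)
    (ht : Tendsto t l (𝓝 0)) (hc : Tendsto c l (𝓝 w))
    (hmem : ∀ᶠ k in l, G (x + t k • c k) ∈ K) : H w ∈ K := by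
  have hlim : Tendsto (fun k => (t k)⁻¹ • (G (x + t k • c k) - G x)) l (𝓝 (H w)) :=
    (hasFDerivWithinAt_univ.2 hG).lim (by simpa using ht.smul hc) (.of_forall fun _ => trivial)
      (by simpa [smul_smul, inv_mul_cancel₀ (ht₀ _)] using hc)
  exact hK.mem_of_tendsto hlim (hmem.mono fun k hk => K.smul_mem _ (K.sub_mem hk hx))

section InnerProductSpace

variable {E : Type*} [NormedAddCommGroup E] [InnerProductSpace ℝ E] {G : E → E} {H : E →L[ℝ] E}
  {x : E}

theorem HasFDerivAt.inner_apply_self_nonneg (hG : HasFDerivAt G H x)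
    (hmono : ∀ᶠ y in 𝓝 x, 0 ≤ ⟪G y - G x, y - x⟫_ℝ) (v : E) : 0 ≤ ⟪H v, v⟫_ℝ := by
  refine ge_of_tendsto ((hG.lim_real v).inner tendsto_const_nhds) ?_
  have hpt : Tendsto (fun c : ℝ => x + c⁻¹ • v) atTop (𝓝 x) := by
    simpa using tendsto_const_nhds.add ((tendsto_inv_atTop_zero (𝕜 := ℝ)).smul_const v)
  filter_upwards [hpt.eventually hmono, eventually_gt_atTop 0] with c hc hc0
  rw [add_sub_cancel_left, inner_smul_right] at hc
  rw [real_inner_smul_left]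
  exact mul_nonneg hc0.le ((mul_nonneg_iff_of_pos_left (inv_pos.2 hc0)).1 hc)

theorem ContinuousLinearMap.IsPositive.apply_eq_zero_of_inner_apply_self_eq_zero
    {T : E →L[ℝ] E} (hT : T.IsPositive) {w : E} (hw : ⟪T w, w⟫_ℝ = 0) : T w = 0 := by
  -- `s ↦ ⟪T (w + s • T w), w + s • T w⟫` is a nonnegative quadratic with constant term `⟪T w, w⟫`.
  have hquad : ∀ s : ℝ, 0 ≤ ⟪T (T w), T w⟫_ℝ * (s * s) + 2 * ⟪T w, T w⟫_ℝ * s + ⟪T w, w⟫_ℝ :=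
    fun s => by
      have hsymm : ⟪T (T w), w⟫_ℝ = ⟪T w, T w⟫_ℝ := hT.isSymmetric (T w) w
      have := hT.inner_nonneg_left (w + s • T w)
      simp only [map_add, map_smul, inner_add_left, inner_add_right, real_inner_smul_left,
        real_inner_smul_right, hsymm] at this
      linarith
  have hdiscrim := discrim_le_zero hquad
  rw [discrim, hw] at hdiscrim
  have hsq : ⟪T w, T w⟫_ℝ ^ 2 ≤ 0 := by linarith
  exact inner_self_eq_zero.1 (pow_eq_zero_iff two_ne_zero |>.1 (le_antisymm hsq (sq_nonneg _)))

section Gradient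

variable [CompleteSpace E] {f : E → ℝ} {g : E}

theorem HasGradientAt.hasDerivAt_add_smul (hf : HasGradientAt f g x) (d : E) :
    HasDerivAt (fun s : ℝ => f (x + s • d)) ⟪g, d⟫_ℝ 0 := by
  have hline : HasDerivAt (fun s : ℝ => x + s • d) d 0 := by
    simpa using ((hasDerivAt_id (0 : ℝ)).smul_const d).const_add x
  have hf' : HasFDerivAt f (toDual ℝ E g) (x + (0 : ℝ) • d) := by simpa using hf.hasFDerivAt
  simpa [Function.comp_def] using hf'.comp_hasDerivAt 0 hline

theorem ConvexOn.inner_gradient_le_sub (hconv : ConvexOn ℝ Set.univ f) (hf : HasGradientAt f g x)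
    (y : E) : ⟪g, y - x⟫_ℝ ≤ f y - f x := by
  have hline : ConvexOn ℝ Set.univ (fun s : ℝ => f (x + s • (y - x))) := by
    simpa [Function.comp_def, AffineMap.lineMap_apply, add_comm] using
      hconv.comp_affineMap (AffineMap.lineMap x y)
  simpa [slope_def_field] using
    hline.le_slope_of_hasDerivAt trivial trivial zero_lt_one (hf.hasDerivAt_add_smul (y - x))

theorem HasGradientAt.eq_of_forall_inner_sub_le {v : E} (hf : HasGradientAt f g x)
    (hv : ∀ y, ⟪v, y - x⟫_ℝ ≤ f y - f x) : v = g := by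
  refine ext_inner_right ℝ fun d => ?_
  have hmin : IsLocalMin (fun s : ℝ => f (x + s • d) - s * ⟪v, d⟫_ℝ) 0 :=
    Eventually.of_forall fun s => by
      have := hv (x + s • d)
      simp only [add_sub_cancel_left, inner_smul_right] at this
      simp only [zero_smul, add_zero, zero_mul, sub_zero]
      linarith
  have := hmin.hasDerivAt_eq_zero ((hf.hasDerivAt_add_smul d).sub (hasDerivAt_mul_const _))
  linarith

theorem HasGradientAt.mem_orthogonal_ker {F : Type*} [NormedAddCommGroup F] [NormedSpace ℝ F]
    {Φ : E →L[ℝ] F} (hf : HasGradientAt f g x) (hmin : ∀ y, Φ y = Φ x → f x ≤ f y) :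
    g ∈ Φ.kerᗮ := by
  refine (Submodule.mem_orthogonal' _ _).2 fun v hv => ?_
  refine IsLocalMin.hasDerivAt_eq_zero (Eventually.of_forall fun s => ?_)
    (hf.hasDerivAt_add_smul v)
  simpa using hmin (x + s • v) (by simp [show Φ v = 0 from hv])

theorem ConvexOn.inner_gradient_sub_nonneg (hconv : ConvexOn ℝ Set.univ f) {y gy : E}
    (hx : HasGradientAt f g x) (hy : HasGradientAt f gy y) : 0 ≤ ⟪gy - g, y - x⟫_ℝ := by
  have h₁ := hconv.inner_gradient_le_sub hx y
  have h₂ := hconv.inner_gradient_le_sub hy x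
  rw [← neg_sub y x, inner_neg_right] at h₂
  rw [inner_sub_left]
  linarith

theorem HasFDerivAt.isSymmetric_of_hasGradientAt (hf : ∀ᶠ y in 𝓝 x, HasGradientAt f (G y) y)
    (hG : HasFDerivAt G H x) : H.IsSymmetric := by
  let D : E →L[ℝ] E →L[ℝ] ℝ := innerSL ℝ
  have hf' : ∀ᶠ y in 𝓝 x, HasFDerivAt f (D (G y)) y := hf.mono fun y hy => hy.hasFDerivAt
  intro u v
  change ⟪H u, v⟫_ℝ = ⟪u, H v⟫_ℝ
  rw [real_inner_comm (H v)]
  exact second_derivative_symmetric_of_eventually hf' (D.hasFDerivAt.comp x hG) u v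

theorem ConvexOn.isPositive_of_hasFDerivAt_gradient
    (hconv : ConvexOn ℝ Set.univ f) (hf : ∀ᶠ y in 𝓝 x, HasGradientAt f (G y) y)
    (hG : HasFDerivAt G H x) : H.IsPositive :=
  (H.isPositive_iff).2 ⟨hG.isSymmetric_of_hasGradientAt hf, hG.inner_apply_self_nonneg
    (hf.mono fun _ hy => hconv.inner_gradient_sub_nonneg hf.self_of_nhds hy)⟩

end Gradient

end InnerProductSpace

theorem stmt9_general (n m : ℕ) (R : EuclideanSpace ℝ (Fin n) → ℝ)
    (hconv : ConvexOn ℝ Set.univ R)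
    (Φ : EuclideanSpace ℝ (Fin n) →L[ℝ] EuclideanSpace ℝ (Fin m))
    (x₀ : EuclideanSpace ℝ (Fin n))
    (hmin : ∀ x, Φ x = Φ x₀ → R x₀ ≤ R x)
    (U : Set (EuclideanSpace ℝ (Fin n))) (hU : U ∈ nhds x₀)
    (gr : EuclideanSpace ℝ (Fin n) → EuclideanSpace ℝ (Fin n))
    (hgr : ∀ x ∈ U, HasGradientAt R (gr x) x)
    (H : EuclideanSpace ℝ (Fin n) →L[ℝ] EuclideanSpace ℝ (Fin n))
    (hH : HasFDerivAt gr H x₀) :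
    ∀ w : EuclideanSpace ℝ (Fin n), Φ w = 0 →
      w ∈ contingentCone
        {x | ∃ u, (ContinuousLinearMap.adjoint Φ) u ∈ subdiff R x} x₀ →
      H w = 0 := by
  rintro w hw ⟨t, c, ht_pos, ht, hc, hmem⟩
  have hgrad : ∀ᶠ y in 𝓝 x₀, HasGradientAt R (gr y) y := eventually_of_mem hU hgr
  have hpts : Tendsto (fun k => x₀ + t k • c k) atTop (𝓝 x₀) := by
    simpa using tendsto_const_nhds.add (ht.smul hc)
  have hgr_mem : ∀ᶠ k in atTop, gr (x₀ + t k • c k) ∈ Φ.kerᗮ := by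
    filter_upwards [hpts.eventually hgrad] with k hk
    obtain ⟨u, hu⟩ := hmem k
    rw [← hk.eq_of_forall_inner_sub_le hu, Φ.orthogonal_ker]
    exact Submodule.le_topologicalClosure _ ⟨u, rfl⟩
  have hHw : H w ∈ Φ.kerᗮ := hH.apply_mem_of_tendsto (Submodule.isClosed_orthogonal _)
    (hgrad.self_of_nhds.mem_orthogonal_ker hmin) (fun k => (ht_pos k).ne') ht hc hgr_mem
  have hpos : H.IsPositive := hconv.isPositive_of_hasFDerivAt_gradient hgrad hH
  exact hpos.apply_eq_zero_of_inner_apply_self_eq_zero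
    (Submodule.inner_left_of_mem_orthogonal hw hHw)

theorem stmt9 (n m : ℕ) (R : EuclideanSpace ℝ (Fin n) → ℝ)
    (hconv : ConvexOn ℝ Set.univ R)
    (Φ : EuclideanSpace ℝ (Fin n) →L[ℝ] EuclideanSpace ℝ (Fin m))
    (x₀ : EuclideanSpace ℝ (Fin n))
    (hmin : ∀ x, Φ x = Φ x₀ → R x₀ ≤ R x)
    (U : Set (EuclideanSpace ℝ (Fin n))) (hU : U ∈ nhds x₀)
    (gr : EuclideanSpace ℝ (Fin n) → EuclideanSpace ℝ (Fin n))
    (hgr : ∀ x ∈ U, HasGradientAt R (gr x) x)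
    (hgrc : ContinuousOn gr U)
    (H : EuclideanSpace ℝ (Fin n) →L[ℝ] EuclideanSpace ℝ (Fin n))
    (hH : HasFDerivAt gr H x₀) :
    ∀ w : EuclideanSpace ℝ (Fin n), Φ w = 0 →
      w ∈ contingentCone
        {x | ∃ u, (ContinuousLinearMap.adjoint Φ) u ∈ subdiff R x} x₀ →
      H w = 0 :=
  stmt9_general n m R hconv Φ x₀ hmin U hU gr hgr H hH
end

section
/- Let x₀ minimize R(x) = ‖D*x‖_{1,2} subject to Φx = Φx₀, and let v ∈ ∂‖ȳ‖_{1,2} (ȳ = D*x₀) satisfy Dv ∈ Im Φ*. Define 𝒦 = {J ∈ ℐᶜ : ‖v_J‖ = 1} and ℋ = {J ∈ ℐᶜ : ‖v_J‖ < 1}. Then W(x₀) := Ker Φ ∩ {w : ⟨e_ℐ, D*_ℐ w⟩ + Σ_{J∈ℐᶜ}‖D*_J w‖ = 0} equals {w ∈ Ker Φ : D*_J w ∈ ℝ₊·v_J for J ∈ 𝒦, and D*_J w = 0 for J ∈ ℋ}. -/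
open scoped Classical

/-!
For `w ∈ Ker Φ` the identity `⟨Dv, w⟩ = 0`, together with `v = e` on the active groups and
`e = 0` on the inactive ones, rewrites `⟨e, D*w⟩ + ∑_{J ∈ ℐᶜ} ‖D*_J w‖` as
`∑_{J ∈ ℐᶜ} (‖D*_J w‖ - ⟨v_J, D*_J w⟩)`. Since `‖v_J‖ ≤ 1`, every summand is nonnegative by
Cauchy–Schwarz, so the sum vanishes iff each summand does; and `⟨v_J, a⟩ = ‖a‖` forces
`a ∈ ℝ₊ v_J` when `‖v_J‖ = 1` and `a = 0` when `‖v_J‖ < 1`.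
-/

/-- The Euclidean norm of the subvector of `u` indexed by the group `J`. -/
noncomputable def gnorm {p q : ℕ} (g : Fin p → Fin q) (J : Fin q)
    (u : Fin p → ℝ) : ℝ :=
  Real.sqrt (∑ i ∈ Finset.univ.filter (fun i => g i = J), (u i) ^ 2)

open Finset RealInnerProductSpace

section InnerProductSpace

variable {E : Type*} [NormedAddCommGroup E] [InnerProductSpace ℝ E]

lemma real_inner_le_norm_of_norm_le_one {u : E} (hu : ‖u‖ ≤ 1) (a : E) : ⟪u, a⟫ ≤ ‖a‖ :=
  (real_inner_le_norm u a).trans (mul_le_of_le_one_left (norm_nonneg a) hu)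

lemma real_inner_eq_norm_iff_of_norm_le_one {u : E} (hu : ‖u‖ ≤ 1) (a : E) :
    ⟪u, a⟫ = ‖a‖ ↔ (‖u‖ = 1 → ∃ c : ℝ, 0 ≤ c ∧ a = c • u) ∧ (‖u‖ < 1 → a = 0) := by
  constructor
  · intro h
    refine ⟨fun hu1 => ⟨‖a‖, norm_nonneg a, ?_⟩, fun hu1 => ?_⟩
    · have := inner_eq_norm_mul_iff_real.1 (by rw [h, hu1, one_mul])
      rwa [hu1, one_smul, eq_comm] at this
    · have : ‖a‖ ≤ ‖u‖ * ‖a‖ := h ▸ real_inner_le_norm u a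
      exact norm_le_zero_iff.1 (by nlinarith [norm_nonneg a])
  · rintro ⟨h_eq, h_lt⟩
    rcases hu.eq_or_lt with hu1 | hu1
    · obtain ⟨c, hc, rfl⟩ := h_eq hu1
      rw [real_inner_smul_right, real_inner_self_eq_norm_sq, norm_smul, hu1,
        Real.norm_of_nonneg hc]
      ring
    · simp [h_lt hu1]

end InnerProductSpace

lemma ContinuousLinearMap.inner_apply_eq_zero_of_adjoint_mem_range
    {𝕜 E F G : Type*} [RCLike 𝕜]
    [NormedAddCommGroup E] [InnerProductSpace 𝕜 E] [CompleteSpace E]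
    [NormedAddCommGroup F] [InnerProductSpace 𝕜 F] [CompleteSpace F]
    [NormedAddCommGroup G] [InnerProductSpace 𝕜 G] [CompleteSpace G]
    {A : E →L[𝕜] F} {B : E →L[𝕜] G} {v : F} (hv : adjoint A v ∈ Set.range (adjoint B))
    {w : E} (hw : B w = 0) : inner 𝕜 v (A w) = 0 := by
  obtain ⟨z, hz⟩ := hv
  rw [← adjoint_inner_left, ← hz, adjoint_inner_left, hw, inner_zero_right]

section Groups

variable {p q : ℕ}

-- The subvector `u_J`, so that library Cauchy–Schwarz applies to `gnorm`.
noncomputable def groupBlock (g : Fin p → Fin q) (J : Fin q) (u : Fin p → ℝ) :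
    EuclideanSpace ℝ {i // g i = J} :=
  WithLp.toLp 2 fun i => u i

lemma sum_filter_eq_sum_subtype (g : Fin p → Fin q) (J : Fin q) (f : Fin p → ℝ) :
    ∑ i ∈ univ.filter (fun i => g i = J), f i = ∑ i : {i // g i = J}, f i :=
  Finset.sum_subtype _ (by simp) f

lemma norm_groupBlock (g : Fin p → Fin q) (J : Fin q) (u : Fin p → ℝ) :
    ‖groupBlock g J u‖ = gnorm g J u := by
  simp [EuclideanSpace.norm_eq, gnorm, groupBlock, sum_filter_eq_sum_subtype]

lemma inner_groupBlock (g : Fin p → Fin q) (J : Fin q) (u a : Fin p → ℝ) :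
    ⟪groupBlock g J u, groupBlock g J a⟫ = ∑ i ∈ univ.filter (fun i => g i = J), u i * a i := by
  simp [groupBlock, PiLp.inner_apply, sum_filter_eq_sum_subtype, mul_comm]

lemma groupBlock_eq_smul_iff (g : Fin p → Fin q) (J : Fin q) (a u : Fin p → ℝ) (c : ℝ) :
    groupBlock g J a = c • groupBlock g J u ↔ ∀ i, g i = J → a i = c * u i := by
  simp [groupBlock, WithLp.ext_iff, funext_iff]

lemma groupBlock_eq_zero_iff (g : Fin p → Fin q) (J : Fin q) (a : Fin p → ℝ) :
    groupBlock g J a = 0 ↔ ∀ i, g i = J → a i = 0 := by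
  simp [groupBlock, WithLp.ext_iff, funext_iff]

lemma sum_filter_mul_le_gnorm {g : Fin p → Fin q} {J : Fin q} {v : Fin p → ℝ}
    (hv : gnorm g J v ≤ 1) (a : Fin p → ℝ) :
    ∑ i ∈ univ.filter (fun i => g i = J), v i * a i ≤ gnorm g J a := by
  rw [← inner_groupBlock, ← norm_groupBlock]
  exact real_inner_le_norm_of_norm_le_one (by rwa [norm_groupBlock]) _

lemma sum_filter_mul_eq_gnorm_iff {g : Fin p → Fin q} {J : Fin q} {v : Fin p → ℝ}
    (hv : gnorm g J v ≤ 1) (a : Fin p → ℝ) :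
    ∑ i ∈ univ.filter (fun i => g i = J), v i * a i = gnorm g J a ↔
      (gnorm g J v = 1 → ∃ c : ℝ, 0 ≤ c ∧ ∀ i, g i = J → a i = c * v i) ∧
      (gnorm g J v < 1 → ∀ i, g i = J → a i = 0) := by
  rw [← inner_groupBlock, ← norm_groupBlock, ← norm_groupBlock,
    real_inner_eq_norm_iff_of_norm_le_one (by rwa [norm_groupBlock])]
  simp only [groupBlock_eq_smul_iff, groupBlock_eq_zero_iff]

lemma sum_filter_not_eq_sum_fiberwise (g : Fin p → Fin q) (active : Fin q → Prop)
    [DecidablePred active] (f : Fin p → ℝ) :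
    ∑ i ∈ univ.filter (fun i => ¬ active (g i)), f i =
      ∑ J ∈ univ.filter (fun J => ¬ active J), ∑ i ∈ univ.filter (fun i => g i = J), f i := by
  rw [← sum_fiberwise_of_maps_to (g := g) (t := univ.filter (fun J => ¬ active J))
    (by simp)]
  refine sum_congr rfl fun J hJ => sum_congr ?_ fun _ _ => rfl
  ext i
  simp only [mem_filter, mem_univ, true_and] at hJ ⊢
  exact ⟨And.right, by rintro rfl; exact ⟨hJ, rfl⟩⟩

lemma sum_mul_add_sum_gnorm_eq (g : Fin p → Fin q) (active : Fin q → Prop)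
    [DecidablePred active] {e v a : Fin p → ℝ} (hv : ∀ i, active (g i) → v i = e i)
    (he : ∀ i, ¬ active (g i) → e i = 0) (hva : ∑ i, v i * a i = 0) :
    ∑ i, e i * a i + ∑ J ∈ univ.filter (fun J => ¬ active J), gnorm g J a =
      ∑ J ∈ univ.filter (fun J => ¬ active J),
        (gnorm g J a - ∑ i ∈ univ.filter (fun i => g i = J), v i * a i) := by
  have split : ∀ i, e i * a i = v i * a i - if ¬ active (g i) then v i * a i else 0 := by
    intro i
    by_cases h : active (g i) <;> simp [h, hv, he]
  rw [sum_congr rfl fun i _ => split i, sum_sub_distrib, hva, ← sum_filter,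
    sum_filter_not_eq_sum_fiberwise, sum_sub_distrib]
  ring

end Groups

theorem stmt15_general (n p q m : ℕ) (g : Fin p → Fin q)
    (Dstar : EuclideanSpace ℝ (Fin n) →L[ℝ] EuclideanSpace ℝ (Fin p))
    (Φ : EuclideanSpace ℝ (Fin n) →L[ℝ] EuclideanSpace ℝ (Fin m))
    (x₀ : EuclideanSpace ℝ (Fin n))
    (e : Fin p → ℝ)
    (he_inact : ∀ i : Fin p, ¬ (∃ j, g j = g i ∧ Dstar x₀ j ≠ 0) → e i = 0)
    (v : EuclideanSpace ℝ (Fin p))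
    -- `v ∈ ∂‖·‖_{1,2}(ȳ)` with `ȳ = D*x₀`:
    (hv_act : ∀ i : Fin p, (∃ j, g j = g i ∧ Dstar x₀ j ≠ 0) → v i = e i)
    (hv_inact : ∀ J : Fin q, ¬ (∃ i, g i = J ∧ Dstar x₀ i ≠ 0) →
      gnorm g J (fun i => v i) ≤ 1)
    -- `Dv ∈ Im Φ*`:
    (hDv : (ContinuousLinearMap.adjoint Dstar) v ∈
      Set.range (ContinuousLinearMap.adjoint Φ)) :
    {w : EuclideanSpace ℝ (Fin n) | Φ w = 0 ∧
        (∑ i, e i * Dstar w i)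
        + ∑ J ∈ Finset.univ.filter
            (fun J => ¬ (∃ i, g i = J ∧ Dstar x₀ i ≠ 0)),
            gnorm g J (fun i => Dstar w i) = 0}
    = {w : EuclideanSpace ℝ (Fin n) | Φ w = 0 ∧
        (∀ J : Fin q, ¬ (∃ i, g i = J ∧ Dstar x₀ i ≠ 0) →
          gnorm g J (fun i => v i) = 1 →
          ∃ lam : ℝ, 0 ≤ lam ∧ ∀ i, g i = J → Dstar w i = lam * v i) ∧
        (∀ J : Fin q, ¬ (∃ i, g i = J ∧ Dstar x₀ i ≠ 0) →
          gnorm g J (fun i => v i) < 1 →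
          ∀ i, g i = J → Dstar w i = 0)} := by
  refine Set.ext fun w => and_congr_right fun hw => ?_
  have hvw : ∑ i, v i * Dstar w i = 0 := by
    simpa [PiLp.inner_apply, mul_comm] using
      Dstar.inner_apply_eq_zero_of_adjoint_mem_range hDv hw
  rw [sum_mul_add_sum_gnorm_eq g (fun J => ∃ i, g i = J ∧ Dstar x₀ i ≠ 0)
      (a := fun i => Dstar w i) hv_act he_inact hvw,
    sum_eq_zero_iff_of_nonneg fun J hJ =>
      sub_nonneg.2 (sum_filter_mul_le_gnorm (hv_inact J (mem_filter.1 hJ).2) _)]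
  calc _ ↔ ∀ J, ¬ (∃ i, g i = J ∧ Dstar x₀ i ≠ 0) →
        gnorm g J (fun i => Dstar w i) =
          ∑ i ∈ univ.filter (fun i => g i = J), v i * Dstar w i := by
        simp only [mem_filter, mem_univ, true_and, sub_eq_zero]
    _ ↔ _ := by
      refine (forall₂_congr fun J hJ =>
        eq_comm.trans (sum_filter_mul_eq_gnorm_iff (hv_inact J hJ) _)).trans ?_
      simp only [imp_and, forall_and]

theorem stmt15 (n p q m : ℕ) (g : Fin p → Fin q)
    (Dstar : EuclideanSpace ℝ (Fin n) →L[ℝ] EuclideanSpace ℝ (Fin p))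
    (Φ : EuclideanSpace ℝ (Fin n) →L[ℝ] EuclideanSpace ℝ (Fin m))
    (R : EuclideanSpace ℝ (Fin n) → ℝ)
    (hR : ∀ x, R x = ∑ J, gnorm g J (fun i => Dstar x i))
    (x₀ : EuclideanSpace ℝ (Fin n))
    (hmin : ∀ x, Φ x = Φ x₀ → R x₀ ≤ R x)
    (e : Fin p → ℝ)
    (he_act : ∀ i : Fin p, (∃ j, g j = g i ∧ Dstar x₀ j ≠ 0) →
      e i = Dstar x₀ i / gnorm g (g i) (fun j => Dstar x₀ j))
    (he_inact : ∀ i : Fin p, ¬ (∃ j, g j = g i ∧ Dstar x₀ j ≠ 0) → e i = 0)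
    (v : EuclideanSpace ℝ (Fin p))
    -- `v ∈ ∂‖·‖_{1,2}(ȳ)` with `ȳ = D*x₀`:
    (hv_act : ∀ i : Fin p, (∃ j, g j = g i ∧ Dstar x₀ j ≠ 0) → v i = e i)
    (hv_inact : ∀ J : Fin q, ¬ (∃ i, g i = J ∧ Dstar x₀ i ≠ 0) →
      gnorm g J (fun i => v i) ≤ 1)
    -- `Dv ∈ Im Φ*`:
    (hDv : (ContinuousLinearMap.adjoint Dstar) v ∈
      Set.range (ContinuousLinearMap.adjoint Φ)) :
    {w : EuclideanSpace ℝ (Fin n) | Φ w = 0 ∧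
        (∑ i, e i * Dstar w i)
        + ∑ J ∈ Finset.univ.filter
            (fun J => ¬ (∃ i, g i = J ∧ Dstar x₀ i ≠ 0)),
            gnorm g J (fun i => Dstar w i) = 0}
    = {w : EuclideanSpace ℝ (Fin n) | Φ w = 0 ∧
        (∀ J : Fin q, ¬ (∃ i, g i = J ∧ Dstar x₀ i ≠ 0) →
          gnorm g J (fun i => v i) = 1 →
          ∃ lam : ℝ, 0 ≤ lam ∧ ∀ i, g i = J → Dstar w i = lam * v i) ∧
        (∀ J : Fin q, ¬ (∃ i, g i = J ∧ Dstar x₀ i ≠ 0) →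
          gnorm g J (fun i => v i) < 1 →
          ∀ i, g i = J → Dstar w i = 0)} :=
  stmt15_general n p q m g Dstar Φ x₀ e he_inact v hv_act hv_inact hDv
end

section
/- In the setting of ℝ⁸ with four groups (1,2),(3,4),(5,6),(7,8), R(x) = Σ of the four group Euclidean norms, and Φ: ℝ⁸ → ℝ³ the matrix with rows (1,0,0,a₄,a₅,a₆,a₇,a₈), (0,1,0,1,0,1,0,1), (0,0,1,b₄,b₅,b₆,b₇,b₈), with x₀ = (0,1,0,0,0,0,0,0): the vector v = (0,1,0,1,0,1,0,1) satisfies v ∈ ∂R(x₀) ∩ Im Φ*, and hence x₀ is an optimal solution of minimizing R subject to Φx = Φx₀. -/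
/-!
Each group norm dominates its second coordinate, so `R16 u ≥ u 1 + u 3 + u 5 + u 7 = ⟪v, u⟫`
with equality at `x₀`; hence `v` is a subgradient. Since `v = Φᵀ e₂`, the linear form `⟪v, ·⟫` is
constant on `{x | Φ x = Φ x₀}`, and the subgradient inequality gives `R16 x ≥ R16 x₀` there.
-/

/-- The group `ℓ₁/ℓ₂` norm on `ℝ⁸` with groups `(1,2), (3,4), (5,6), (7,8)`. -/
noncomputable def R16 (x : Fin 8 → ℝ) : ℝ :=
  Real.sqrt ((x 0) ^ 2 + (x 1) ^ 2) + Real.sqrt ((x 2) ^ 2 + (x 3) ^ 2)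
  + Real.sqrt ((x 4) ^ 2 + (x 5) ^ 2) + Real.sqrt ((x 6) ^ 2 + (x 7) ^ 2)

theorem le_of_subgradient_of_vecMul_eq {m n 𝕜 : Type*} [Fintype m] [Fintype n] [CommRing 𝕜]
    [PartialOrder 𝕜] [IsOrderedAddMonoid 𝕜] {M : Matrix m n 𝕜} {f : (n → 𝕜) → 𝕜} {x₀ v : n → 𝕜}
    (hsub : ∀ u, f u - f x₀ ≥ ∑ i, v i * (u i - x₀ i)) {w : m → 𝕜} (hw : Matrix.vecMul w M = v)
    {x : n → 𝕜} (hx : M.mulVec x = M.mulVec x₀) : f x₀ ≤ f x := by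
  have horth : ∑ i, v i * (x i - x₀ i) = 0 := by
    change v ⬝ᵥ (x - x₀) = 0
    rw [← hw, ← Matrix.dotProduct_mulVec, Matrix.mulVec_sub, hx, sub_self,
      dotProduct_zero]
  exact sub_nonneg.mp (horth ▸ hsub x)

theorem le_sqrt_sq_add_sq (a b : ℝ) : b ≤ √(a ^ 2 + b ^ 2) :=
  (le_abs_self b).trans (Real.abs_le_sqrt (le_add_of_nonneg_left (sq_nonneg a)))

theorem add_add_add_le_R16 (u : Fin 8 → ℝ) : u 1 + u 3 + u 5 + u 7 ≤ R16 u := by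
  unfold R16
  gcongr <;> apply le_sqrt_sq_add_sq

theorem stmt16 (a₄ a₅ a₆ a₇ a₈ b₄ b₅ b₆ b₇ b₈ : ℝ) :
    let M : Matrix (Fin 3) (Fin 8) ℝ :=
      !![1, 0, 0, a₄, a₅, a₆, a₇, a₈;
         0, 1, 0, 1, 0, 1, 0, 1;
         0, 0, 1, b₄, b₅, b₆, b₇, b₈]
    let x₀ : Fin 8 → ℝ := ![0, 1, 0, 0, 0, 0, 0, 0]
    let v : Fin 8 → ℝ := ![0, 1, 0, 1, 0, 1, 0, 1]
    -- `v` is a subgradient of `R16` at `x₀` …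
    (∀ u : Fin 8 → ℝ, R16 u - R16 x₀ ≥ ∑ i, v i * (u i - x₀ i)) ∧
    -- … and `v ∈ Im Φ*` …
    (∃ u : Fin 3 → ℝ, Matrix.vecMul u M = v) ∧
    -- … hence `x₀` minimizes `R16` over `{x | Φ x = Φ x₀}`.
    (∀ x : Fin 8 → ℝ, M.mulVec x = M.mulVec x₀ → R16 x₀ ≤ R16 x) := by
  intro M x₀ v
  have hR16x₀ : R16 x₀ = 1 := by simp [R16, x₀, Matrix.cons_val]
  have hsub : ∀ u, R16 u - R16 x₀ ≥ ∑ i, v i * (u i - x₀ i) := fun u => by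
    have hsum : ∑ i, v i * (u i - x₀ i) = u 1 + u 3 + u 5 + u 7 - 1 := by
      simp [Fin.sum_univ_eight, Matrix.cons_val, v, x₀]
      ring
    linarith [add_add_add_le_R16 u]
  have hw : Matrix.vecMul ![0, 1, 0] M = v := by
    ext j
    fin_cases j <;> simp [M, v, Matrix.vecMul, dotProduct, Fin.sum_univ_three]
  exact ⟨hsub, ⟨_, hw⟩, fun x hx => le_of_subgradient_of_vecMul_eq hsub hw hx⟩
end
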